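/- arXiv:2508.21676 — 3 statements merged into one kernel-verified Lean document; each statement's English description precedes it below -/
import Mathlib

section
/- Let k be a field, let d be a positive integer, and let w = (w_1, ..., w_d) be a d-tuple of positive integers with gcd(w_1, ..., w_d) = 1. Let f_1, ..., f_d be nonzero elements of the formal power series ring k[[x_1, ..., x_d]]. Then either the quotient ring k[[x_1, ..., x_d]]/(f_1, ..., f_d) is infinite-dimensional as a k-vector space, or its k-dimension D satisfies w(f_1) · w(f_2) · ... · w(f_d) ≤ D · w_1 · w_2 · ... · w_d. -/
open Finset

/-- The weighted order of a multivariate formal power series: the minimum of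
`∑ i, w i * m i` over all monomials `m` occurring in `f` with nonzero coefficient. -/
noncomputable def wOrder {k : Type*} [Field k] {d : ℕ} (w : Fin d → ℕ)
    (f : MvPowerSeries (Fin d) k) : ℕ :=
  sInf {n : ℕ | ∃ m : Fin d →₀ ℕ, MvPowerSeries.coeff m f ≠ 0 ∧ ∑ i, w i * m i = n}


private lemma pow_helper (x c : ℕ) : ∀ d : ℕ, (x+c)^(d+1) ≤ x^(d+1) + (d+1)*c*(x+c)^d := by
  intro d
  induction d with
  | zero => simp
  | succ d ih =>
    have h2 : (x+c)^(d+1) * (x+c) ≤ (x^(d+1) + (d+1)*c*(x+c)^d) * (x+c) :=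
      Nat.mul_le_mul_right _ ih
    have h4 : x^(d+1) * c ≤ c * (x+c)^(d+1) := by
      rw [mul_comm]
      exact Nat.mul_le_mul_left _ (Nat.pow_le_pow_left (Nat.le_add_right _ _) _)
    calc (x+c)^(d+1+1) = (x+c)^(d+1) * (x+c) := by ring
    _ ≤ (x^(d+1) + (d+1)*c*(x+c)^d) * (x+c) := h2
    _ = x^(d+1) * x + (x^(d+1) * c + (d+1)*c*((x+c)^d*(x+c))) := by ring
    _ ≤ x^(d+1) * x + (c * (x+c)^(d+1) + (d+1)*c*((x+c)^d*(x+c))) := by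
        exact Nat.add_le_add_left (Nat.add_le_add_right h4 _) _
    _ = x^(d+1+1) + (d+1+1)*c*(x+c)^(d+1) := by ring

private lemma arith_final (P Q E d : ℕ) (hd : 1 ≤ d)
    (H : ∀ M : ℕ, P * (M+d).choose d ≤ Q * (M+E+d).choose d) : P ≤ Q := by
  by_contra hQP
  push_neg at hQP
  have H2 : ∀ M : ℕ, P * (M+1)^d ≤ Q * (M+E+d)^d := fun M => by
    have h1 : (M+1)^d ≤ (M+d).descFactorial d := by
      have h := Nat.pow_sub_le_descFactorial (M+d) d
      have e : M+d+1-d = M+1 := by omega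
      rwa [e] at h
    have h2 : (M+E+d).descFactorial d ≤ (M+E+d)^d := Nat.descFactorial_le_pow _ _
    have h3 : P * (M+d).descFactorial d ≤ Q * (M+E+d).descFactorial d := by
      rw [Nat.descFactorial_eq_factorial_mul_choose, Nat.descFactorial_eq_factorial_mul_choose]
      calc P * (d.factorial * (M+d).choose d) = d.factorial * (P * (M+d).choose d) := by ring
      _ ≤ d.factorial * (Q * (M+E+d).choose d) := Nat.mul_le_mul_left _ (H M)
      _ = Q * (d.factorial * (M+E+d).choose d) := by ring
    calc P * (M+1)^d ≤ P * (M+d).descFactorial d := Nat.mul_le_mul_left _ h1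
    _ ≤ Q * (M+E+d).descFactorial d := h3
    _ ≤ Q * (M+E+d)^d := Nat.mul_le_mul_left _ h2
  -- set c so that M+E+d = (M+1)+c
  set c := E + d - 1 with hc
  have hcM : ∀ M : ℕ, M+E+d = (M+1)+c := fun M => by omega
  -- take x = P*d*c+1, i.e. M = P*d*c
  set x := P*d*c + 1 with hx
  have key := H2 (P*d*c)
  rw [hcM] at key
  -- P * x^d ≤ Q * (x+c)^d with x = P*d*c+1
  obtain ⟨d', rfl⟩ : ∃ d', d = d' + 1 := ⟨d - 1, by omega⟩
  have hb : P * (x+c)^(d'+1) ≤ P * (x^(d'+1) + (d'+1)*c*(x+c)^d') :=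
    Nat.mul_le_mul_left _ (pow_helper x c d')
  have h5 : P * (x+c)^(d'+1) ≤ Q * (x+c)^(d'+1) + P*((d'+1)*c)*(x+c)^d' := by
    calc P * (x+c)^(d'+1) ≤ P * x^(d'+1) + P*((d'+1)*c)*(x+c)^d' := by
          calc P * (x+c)^(d'+1) ≤ P * (x^(d'+1) + (d'+1)*c*(x+c)^d') := hb
          _ = P * x^(d'+1) + P*((d'+1)*c)*(x+c)^d' := by ring
    _ ≤ Q * (x+c)^(d'+1) + P*((d'+1)*c)*(x+c)^d' := by
          exact Nat.add_le_add_right (key.trans (Nat.mul_le_mul_left _ (Nat.pow_le_pow_left (by omega) _))) _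
  -- (x+c)^(d'+1) = (x+c)*(x+c)^d'
  have hpos : 0 < (x+c)^d' := Nat.pow_pos (by omega)
  have h6 : (Q+1) * ((x+c) * (x+c)^d') ≤ Q * ((x+c) * (x+c)^d') + P*((d'+1)*c)*(x+c)^d' := by
    calc (Q+1) * ((x+c) * (x+c)^d') ≤ P * ((x+c) * (x+c)^d') := by
          exact Nat.mul_le_mul_right _ (by omega)
    _ = P * (x+c)^(d'+1) := by ring
    _ ≤ Q * (x+c)^(d'+1) + P*((d'+1)*c)*(x+c)^d' := h5
    _ = Q * ((x+c) * (x+c)^d') + P*((d'+1)*c)*(x+c)^d' := by ring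
  have h7 : (x+c) * (x+c)^d' ≤ P*((d'+1)*c)*(x+c)^d' := by
    have := h6
    nlinarith [hpos]
  have h8 : x + c ≤ P*((d'+1)*c) := Nat.le_of_mul_le_mul_right h7 hpos
  have hxx : x = P*((d'+1)*c) + 1 := by rw [hx]; ring
  omega

private def sbSet (d M : ℕ) : Finset (Fin d → ℕ) :=
  (Fintype.piFinset fun _ => Finset.range (M+1)).filter (fun a => ∑ i, a i ≤ M)

private lemma mem_sbSet {d M : ℕ} {a : Fin d → ℕ} : a ∈ sbSet d M ↔ ∑ i, a i ≤ M := by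
  simp only [sbSet, Finset.mem_filter, Fintype.mem_piFinset, Finset.mem_range]
  constructor
  · exact fun h => h.2
  · intro h
    refine ⟨fun i => ?_, h⟩
    have : a i ≤ ∑ j, a j := Finset.single_le_sum (fun j _ => Nat.zero_le _) (Finset.mem_univ i)
    omega

private lemma card_sbSet : ∀ (d M : ℕ), (sbSet d M).card = (M+d).choose d := by
  intro d
  induction d with
  | zero =>
    intro M
    rw [Nat.choose_zero_right]
    have : sbSet 0 M = {![]} := by
      ext a
      simp [mem_sbSet, Matrix.empty_eq a]
    rw [this, Finset.card_singleton]
  | succ d ih =>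
    intro M
    have hmaps : ∀ a ∈ sbSet (d+1) M, a 0 ∈ Finset.range (M+1) := by
      intro a ha
      rw [mem_sbSet] at ha
      have : a 0 ≤ ∑ i, a i := Finset.single_le_sum (fun j _ => Nat.zero_le _) (Finset.mem_univ 0)
      simp only [Finset.mem_range]; omega
    rw [Finset.card_eq_sum_card_fiberwise hmaps]
    have hfib : ∀ j ∈ Finset.range (M+1),
        ((sbSet (d+1) M).filter (fun a => a 0 = j)).card = (sbSet d (M-j)).card := by
      intro j hj
      simp only [Finset.mem_range] at hj
      apply Finset.card_nbij' (fun a => Fin.tail a) (fun b => Fin.cons j b)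
      · intro a ha
        simp only [Finset.mem_coe, Finset.mem_filter] at ha ⊢
        obtain ⟨ha1, ha2⟩ := ha
        rw [mem_sbSet] at ha1 ⊢
        rw [Fin.sum_univ_succ, ha2] at ha1
        simpa [Fin.tail] using by omega
      · intro b hb
        rw [Finset.mem_coe, mem_sbSet] at hb
        simp only [Finset.mem_coe, Finset.mem_filter, Fin.cons_zero, and_true]
        rw [mem_sbSet, Fin.sum_univ_succ, Fin.cons_zero]
        simp only [Fin.cons_succ]
        omega
      · intro a ha
        simp only [Finset.mem_coe, Finset.mem_filter] at ha
        rw [← ha.2]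
        exact Fin.cons_self_tail a
      · intro b _
        simp [Fin.tail_cons]
    rw [Finset.sum_congr rfl hfib]
    have hre : ∑ j ∈ Finset.range (M+1), (sbSet d (M-j)).card
        = ∑ j ∈ Finset.range (M+1), (M-j+d).choose d := by
      exact Finset.sum_congr rfl (fun j _ => ih (M-j))
    rw [hre]
    rw [← Finset.sum_range_reflect (fun j => (M-j+d).choose d) (M+1)]
    have hsimp : ∀ j ∈ Finset.range (M+1), (M-(M+1-1-j)+d).choose d = (d+j).choose d := by
      intro j hj
      simp only [Finset.mem_range] at hj
      congr 1
      omega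
    rw [Finset.sum_congr rfl hsimp]
    have hfin : ∑ j ∈ Finset.range (M+1), (d+j).choose d = (M+d+1).choose (d+1) := by
      rw [← Nat.sum_Icc_choose]
      rw [show Finset.Icc d (M+d) = Finset.Ico d (M+d+1) by rw [Finset.Ico_add_one_right_eq_Icc]]
      rw [Finset.sum_Ico_eq_sum_range]
      have h : M+d+1-d = M+1 := by omega
      rw [h]
    rw [hfin, show M+d+1 = M+(d+1) by omega]

private def tSet' (d : ℕ) (v : Fin d → ℕ) (N : ℕ) : Finset (Fin d → ℕ) :=
  (Fintype.piFinset fun _ => Finset.range N).filter (fun m => ∑ i, v i * m i < N)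

private lemma mem_tSet' {d N : ℕ} {v : Fin d → ℕ} (hv : ∀ i, 1 ≤ v i) {m : Fin d → ℕ} :
    m ∈ tSet' d v N ↔ ∑ i, v i * m i < N := by
  simp only [tSet', Finset.mem_filter, Fintype.mem_piFinset, Finset.mem_range]
  constructor
  · exact fun h => h.2
  · intro h
    refine ⟨fun i => ?_, h⟩
    have h1 : v i * m i ≤ ∑ j, v j * m j :=
      Finset.single_le_sum (f := fun j => v j * m j) (fun j _ => Nat.zero_le _) (Finset.mem_univ i)
    have h2 : m i ≤ v i * m i := Nat.le_mul_of_pos_left _ (hv i)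
    omega

private lemma lemA {d M : ℕ} {v : Fin d → ℕ} (hv : ∀ i, 1 ≤ v i) :
    (sbSet d M).card ≤ (∏ i, v i) * (tSet' d v (M+1)).card := by
  classical
  set f : (Fin d → ℕ) → (Fin d → ℕ) := fun a i => a i / v i with hf
  have himg : (sbSet d M).image f ⊆ tSet' d v (M+1) := by
    intro b hb
    simp only [Finset.mem_image] at hb
    obtain ⟨a, ha, rfl⟩ := hb
    rw [mem_tSet' hv]
    rw [mem_sbSet] at ha
    have : ∑ i, v i * (f a i) ≤ ∑ i, a i := by
      apply Finset.sum_le_sum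
      intro i _
      exact Nat.mul_div_le (a i) (v i)
    omega
  have hcard := Finset.card_le_mul_card_image (f := f) (sbSet d M) (∏ i, v i) ?fiber
  · exact hcard.trans (Nat.mul_le_mul_left _ (Finset.card_le_card himg))
  case fiber =>
    intro b _
    refine le_trans (Finset.card_le_card_of_injOn
        (t := Fintype.piFinset fun i => Finset.range (v i)) (fun a i => a i % v i) ?_ ?_) ?_
    · intro a _
      simp only [Finset.mem_coe, Fintype.mem_piFinset, Finset.mem_range]
      intro i
      exact Nat.mod_lt _ (hv i)
    · intro a1 h1 a2 h2 heq
      simp only [Finset.mem_coe, Finset.mem_filter] at h1 h2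
      funext i
      have e1 : a1 i = a1 i / v i * v i + a1 i % v i := (Nat.div_add_mod' (a1 i) (v i)).symm
      have e2 : a2 i = a2 i / v i * v i + a2 i % v i := (Nat.div_add_mod' (a2 i) (v i)).symm
      have e3 : a1 i / v i = a2 i / v i := by
        have b1 : f a1 = b := h1.2
        have b2 : f a2 = b := h2.2
        have : f a1 i = f a2 i := by rw [b1, b2]
        simpa [hf] using this
      have e4 : a1 i % v i = a2 i % v i := congrFun heq i
      rw [e1, e2, e3, e4]
    · rw [Fintype.card_piFinset]
      simp

private lemma lemB {d N : ℕ} {v : Fin d → ℕ} (hv : ∀ i, 1 ≤ v i) :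
    (tSet' d v N).card * (∏ i, v i) ≤ (sbSet d ((N-1) + ∑ i, (v i - 1))).card := by
  classical
  rcases Nat.eq_zero_or_pos N with rfl | hN
  · have : tSet' d v 0 = ∅ := by
      ext m; rw [mem_tSet' hv]; simp
    simp [this]
  have hpi : (∏ i, v i) = (Fintype.piFinset fun i => Finset.range (v i)).card := by
    rw [Fintype.card_piFinset]; simp
  rw [hpi, ← Finset.card_product]
  apply Finset.card_le_card_of_injOn (fun p i => v i * p.1 i + p.2 i)
  · rintro ⟨α, r⟩ hp
    simp only [Finset.mem_coe, Finset.mem_product, Fintype.mem_piFinset, Finset.mem_range] at hp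
    obtain ⟨hα, hr⟩ := hp
    rw [mem_tSet' hv] at hα
    rw [Finset.mem_coe, mem_sbSet]
    show (∑ i, (v i * α i + r i)) ≤ N - 1 + ∑ i, (v i - 1)
    rw [Finset.sum_add_distrib]
    have h2 : ∑ i, r i ≤ ∑ i, (v i - 1) := by
      apply Finset.sum_le_sum
      intro i _
      have := hr i
      omega
    omega
  · rintro ⟨α1, r1⟩ h1 ⟨α2, r2⟩ h2 heq
    simp only [Finset.mem_coe, Finset.mem_product, Fintype.mem_piFinset, Finset.mem_range] at h1 h2
    have hα : α1 = α2 := by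
      funext i
      have e := congrFun heq i
      simp only at e
      have r1i := h1.2 i
      have r2i := h2.2 i
      have d1 : (v i * α1 i + r1 i) / v i = α1 i := by
        rw [Nat.mul_add_div (hv i), Nat.div_eq_of_lt r1i]; omega
      have d2 : (v i * α2 i + r2 i) / v i = α2 i := by
        rw [Nat.mul_add_div (hv i), Nat.div_eq_of_lt r2i]; omega
      rw [← d1, ← d2, e]
    have hr : r1 = r2 := by
      funext i
      have e := congrFun heq i
      simp only at e
      rw [congrFun hα i] at e
      omega
    rw [Prod.mk.injEq]
    exact ⟨hα, hr⟩

section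
variable {k : Type*} [Field k] {d : ℕ} (w : Fin d → ℕ)

abbrev wt (m : Fin d →₀ ℕ) : ℕ := ∑ i, w i * m i

lemma wt_add (m m' : Fin d →₀ ℕ) : wt w (m + m') = wt w m + wt w m' := by
  simp [wt, Finsupp.add_apply, mul_add, Finset.sum_add_distrib]

lemma wOrder_exists {f : MvPowerSeries (Fin d) k} (hf : f ≠ 0) :
    ∃ m, MvPowerSeries.coeff m f ≠ 0 ∧ wt w m = wOrder w f := by
  have hne : {n : ℕ | ∃ m : Fin d →₀ ℕ, MvPowerSeries.coeff m f ≠ 0 ∧ ∑ i, w i * m i = n}.Nonempty := by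
    obtain ⟨m, hm⟩ : ∃ m, MvPowerSeries.coeff m f ≠ 0 := by
      by_contra h
      push_neg at h
      exact hf (MvPowerSeries.ext fun m => by rw [h m, map_zero])
    exact ⟨_, m, hm, rfl⟩
  exact Nat.sInf_mem hne

lemma wOrder_le {f : MvPowerSeries (Fin d) k} {m : Fin d →₀ ℕ}
    (h : MvPowerSeries.coeff m f ≠ 0) : wOrder w f ≤ wt w m :=
  Nat.sInf_le ⟨m, h, rfl⟩

/-- The submodule of power series all of whose monomials have weighted degree ≥ N. -/
def Flt (N : ℕ) : Submodule k (MvPowerSeries (Fin d) k) where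
  carrier := {g | ∀ m : Fin d →₀ ℕ, wt w m < N → MvPowerSeries.coeff m g = 0}
  add_mem' := fun hg hh m hm => by rw [map_add, hg m hm, hh m hm, add_zero]
  zero_mem' := fun m _ => map_zero _
  smul_mem' := fun c g hg m hm => by
    rw [MvPowerSeries.coeff_smul, hg m hm, mul_zero]

lemma Flt_zero : Flt (k := k) w 0 = ⊤ := by
  ext g; simp [Flt]

lemma Flt_mono {N N' : ℕ} (h : N ≤ N') : Flt (k := k) w N' ≤ Flt w N :=
  fun _ hg m hm => hg m (lt_of_lt_of_le hm h)

lemma Flt_mul {N : ℕ} {g h : MvPowerSeries (Fin d) k} (hg : g ∈ Flt w N) :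
    g * h ∈ Flt w (N + wOrder w h) := by
  intro m hm
  rw [MvPowerSeries.coeff_mul]
  apply Finset.sum_eq_zero
  rintro ⟨p, q⟩ hpq
  rw [Finset.HasAntidiagonal.mem_antidiagonal] at hpq
  by_cases hq : MvPowerSeries.coeff q h = 0
  · rw [hq, mul_zero]
  · have h1 : wOrder w h ≤ wt w q := wOrder_le w hq
    have h2 : wt w p + wt w q = wt w m := by rw [← wt_add, hpq]
    have : wt w p < N := by omega
    rw [hg p this, zero_mul]

end

section Span
variable {k : Type*} [Field k] {d D : ℕ} (w : Fin d → ℕ)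
variable (f : Fin d → MvPowerSeries (Fin d) k) (e : Fin D → MvPowerSeries (Fin d) k)

/-- Generators: products of powers of the `f i` of weighted order `< N`, times the `e j`. -/
def genSet (N : ℕ) : Set (MvPowerSeries (Fin d) k) :=
  {x | ∃ (α : Fin d → ℕ) (j : Fin D),
    (∑ i, wOrder w (f i) * α i) < N ∧ (∏ i, f i ^ α i) * e j = x}

lemma span_claim
    (hn : ∀ i, 1 ≤ wOrder w (f i))
    (hspan : ∀ g : MvPowerSeries (Fin d) k, ∃ (c : Fin D → k) (h : Fin d → MvPowerSeries (Fin d) k),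
      g = (∑ j, c j • e j) + ∑ i, h i * f i) :
    ∀ N, ∀ g : MvPowerSeries (Fin d) k,
      g ∈ Submodule.span k (genSet w f e N) ⊔ Flt w N := by
  intro N
  induction N using Nat.strong_induction_on with
  | _ N ih =>
    intro g
    rcases Nat.eq_zero_or_pos N with rfl | hN
    · rw [Flt_zero]
      exact Submodule.mem_sup_right Submodule.mem_top
    obtain ⟨c, h, rfl⟩ := hspan g
    apply Submodule.add_mem
    · apply Submodule.mem_sup_left
      apply Submodule.sum_mem
      intro j _
      apply Submodule.smul_mem
      apply Submodule.subset_span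
      exact ⟨0, j, by simpa using hN, by simp⟩
    apply Submodule.sum_mem
    intro i _
    set n := wOrder w (f i) with hni
    have hlt : N - n < N := by have := hn i; omega
    have := ih (N - n) hlt (h i)
    rw [Submodule.mem_sup] at this
    obtain ⟨s, hs, r, hr, hsr⟩ := this
    rw [← hsr, add_mul]
    apply Submodule.add_mem
    · -- s * f i ∈ span (genSet w f e N)
      apply Submodule.mem_sup_left
      have hmap : Submodule.map (LinearMap.mulRight k (f i))
          (Submodule.span k (genSet w f e (N - n))) ≤ Submodule.span k (genSet w f e N) := by
        rw [Submodule.map_span]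
        apply Submodule.span_mono
        rintro _ ⟨x, ⟨α, j, hα, rfl⟩, rfl⟩
        classical
        refine ⟨(fun i' => α i' + (if i' = i then 1 else 0)), j, ?_, ?_⟩
        · have hsum : ∑ i', wOrder w (f i') * (α i' + (if i' = i then 1 else 0))
              = (∑ i', wOrder w (f i') * α i') + n := by
            simp only [mul_add, Finset.sum_add_distrib]
            congr 1
            rw [Finset.sum_eq_single i]
            · simp [hni]
            · intro b _ hb; simp [hb]
            · simp
          rw [hsum]
          omega
        · simp only [LinearMap.mulRight_apply]
          have hprod : ∏ i', f i' ^ (α i' + (if i' = i then 1 else 0))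
              = (∏ i', f i' ^ α i') * f i := by
            simp only [pow_add]
            rw [Finset.prod_mul_distrib]
            congr 1
            rw [Finset.prod_eq_single i]
            · simp
            · intro b _ hb; simp [hb]
            · simp
          rw [hprod]
          ring
      apply hmap
      exact Submodule.mem_map_of_mem hs
    · -- r * f i ∈ Flt w N
      apply Submodule.mem_sup_right
      have := Flt_mul w (h := f i) hr
      exact Flt_mono w (by omega) this
end Span

section CardBound
variable {k : Type*} [Field k] {d D : ℕ}

lemma card_bound (w : Fin d → ℕ) (hw : ∀ i, 1 ≤ w i)
    (f : Fin d → MvPowerSeries (Fin d) k) (e : Fin D → MvPowerSeries (Fin d) k)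
    (hn : ∀ i, 1 ≤ wOrder w (f i))
    (hspan : ∀ g : MvPowerSeries (Fin d) k, ∃ (c : Fin D → k) (h : Fin d → MvPowerSeries (Fin d) k),
      g = (∑ j, c j • e j) + ∑ i, h i * f i)
    (N : ℕ) :
    (tSet' d w N).card ≤ (tSet' d (fun i => wOrder w (f i)) N).card * D := by
  classical
  set T := tSet' d w N with hT
  set toF : (Fin d → ℕ) → (Fin d →₀ ℕ) := fun m => Finsupp.equivFunOnFinite.symm m with htoF
  set π : MvPowerSeries (Fin d) k →ₗ[k] (↥T → k) :=
    LinearMap.pi (fun m => MvPowerSeries.coeff (toF ↑m)) with hπ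
  have hwt : ∀ m : Fin d → ℕ, wt w (toF m) = ∑ i, w i * m i := by
    intro m
    simp [wt, htoF]
  -- π vanishes on Flt w N
  have hker : ∀ g ∈ Flt w N, π g = 0 := by
    intro g hg
    funext m
    have hmem : ∑ i, w i * (m : Fin d → ℕ) i < N := by
      exact (mem_tSet' hw).mp m.2
    have : wt w (toF ↑m) < N := by rw [hwt]; exact hmem
    exact hg _ this
  -- π is surjective
  have hsurj : Function.Surjective π := by
    intro φ
    refine ⟨∑ m ∈ T.attach, MvPowerSeries.monomial (toF ↑m) (φ m), ?_⟩
    funext m'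
    rw [hπ]
    simp only [LinearMap.pi_apply, map_sum]
    rw [Finset.sum_eq_single m']
    · rw [MvPowerSeries.coeff_monomial_same]
    · intro b _ hb
      rw [MvPowerSeries.coeff_monomial, if_neg]
      intro hEq
      have : (m' : Fin d → ℕ) = ↑b := by
        have := Finsupp.equivFunOnFinite.symm.injective hEq
        exact this
      exact hb (Subtype.ext this.symm)
    · intro hm'
      exact absurd (Finset.mem_attach T m') hm'
  -- the spanning family
  set B := tSet' d (fun i => wOrder w (f i)) N with hB
  set v : ↥B × Fin D → (↥T → k) := fun p => π ((∏ i, f i ^ (p.1 : Fin d → ℕ) i) * e p.2) with hv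
  have hspan_top : Submodule.span k (Set.range v) = ⊤ := by
    rw [eq_top_iff]
    intro φ _
    obtain ⟨g, rfl⟩ := hsurj φ
    have hg := span_claim w f e hn hspan N g
    rw [Submodule.mem_sup] at hg
    obtain ⟨s, hs, r, hr, hsr⟩ := hg
    have : π g = π s := by rw [← hsr, map_add, hker r hr, add_zero]
    rw [this]
    have hπs : π s ∈ Submodule.map π (Submodule.span k (genSet w f e N)) :=
      Submodule.mem_map_of_mem hs
    rw [Submodule.map_span] at hπs
    refine Submodule.span_mono ?_ hπs
    rintro _ ⟨x, ⟨α, j, hα, rfl⟩, rfl⟩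
    have hαB : α ∈ B := by rw [hB, mem_tSet' hn]; exact hα
    exact ⟨(⟨α, hαB⟩, j), rfl⟩
  have hfr : Module.finrank k (↥T → k) = T.card := by
    rw [Module.finrank_pi]
    exact Fintype.card_coe T
  have hle := finrank_le_of_span_eq_top hspan_top
  rw [hfr, Fintype.card_prod, Fintype.card_coe, Fintype.card_fin] at hle
  exact hle
end CardBound

theorem stmt0 (k : Type*) [Field k] (d : ℕ) (hd : 0 < d) (w : Fin d → ℕ)
    (hw : ∀ i, 0 < w i) (hgcd : Finset.univ.gcd w = 1)
    (f : Fin d → MvPowerSeries (Fin d) k) (hf : ∀ i, f i ≠ 0) :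
    ¬ FiniteDimensional k (MvPowerSeries (Fin d) k ⧸ Ideal.span (Set.range f)) ∨
      (∏ i, wOrder w (f i)) ≤
        Module.finrank k (MvPowerSeries (Fin d) k ⧸ Ideal.span (Set.range f)) *
          ∏ i, w i := by
  classical
  by_cases hFD : FiniteDimensional k (MvPowerSeries (Fin d) k ⧸ Ideal.span (Set.range f))
  swap
  · exact Or.inl hFD
  right
  by_cases h0 : ∃ i, wOrder w (f i) = 0
  · obtain ⟨i, hi⟩ := h0
    rw [Finset.prod_eq_zero (Finset.mem_univ i) hi]
    exact Nat.zero_le _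
  push_neg at h0
  have hn : ∀ i, 1 ≤ wOrder w (f i) := fun i => Nat.one_le_iff_ne_zero.mpr (h0 i)
  haveI := hFD
  set I := Ideal.span (Set.range f) with hI
  set A := MvPowerSeries (Fin d) k ⧸ I with hA
  set D := Module.finrank k A with hD
  -- lift a basis of the quotient
  have b : Module.Basis (Fin D) k A := Module.finBasis k A
  have hsurj : Function.Surjective (Ideal.Quotient.mk I) := Ideal.Quotient.mk_surjective
  choose e he using fun j => hsurj (b j)
  -- the spanning hypothesis
  have hspan : ∀ g : MvPowerSeries (Fin d) k,
      ∃ (c : Fin D → k) (h : Fin d → MvPowerSeries (Fin d) k),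
        g = (∑ j, c j • e j) + ∑ i, h i * f i := by
    intro g
    set c : Fin D → k := fun j => b.repr (Ideal.Quotient.mk I g) j with hc
    have hb : ∑ j, c j • b j = Ideal.Quotient.mk I g := b.sum_repr _
    have hmk : Ideal.Quotient.mk I (∑ j, c j • e j) = Ideal.Quotient.mk I g := by
      have : Ideal.Quotient.mk I (∑ j, c j • e j)
          = ∑ j, c j • Ideal.Quotient.mk I (e j) := by
        rw [← Ideal.Quotient.mkₐ_eq_mk k I]
        simp
      rw [this]
      simp only [he]
      exact hb
    have hmem : g - ∑ j, c j • e j ∈ I := by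
      rw [← Ideal.Quotient.eq_zero_iff_mem, map_sub, hmk, sub_self]
    rw [hI] at hmem
    rw [← Ideal.submodule_span_eq, Submodule.mem_span_range_iff_exists_fun] at hmem
    obtain ⟨h, hh⟩ := hmem
    refine ⟨c, h, ?_⟩
    have : ∑ i, h i * f i = g - ∑ j, c j • e j := by
      rw [← hh]
      simp [smul_eq_mul]
    rw [this]
    ring
  -- main inequality chain
  set n : Fin d → ℕ := fun i => wOrder w (f i) with hnn
  set E : ℕ := ∑ i, (n i - 1) with hE
  have hw1 : ∀ i, 1 ≤ w i := fun i => hw i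
  have Hmain : ∀ M : ℕ, (∏ i, n i) * (M+d).choose d
      ≤ ((∏ i, w i) * D) * (M+E+d).choose d := by
    intro M
    have c1 : (sbSet d M).card ≤ (∏ i, w i) * (tSet' d w (M+1)).card := lemA hw1
    have c2 : (tSet' d w (M+1)).card ≤ (tSet' d n (M+1)).card * D :=
      card_bound w hw1 f e hn hspan (M+1)
    have c3 : (tSet' d n (M+1)).card * (∏ i, n i) ≤ (sbSet d (M + E)).card := by
      have := lemB (N := M+1) (v := n) hn
      simpa using this
    calc (∏ i, n i) * (M+d).choose d = (∏ i, n i) * (sbSet d M).card := by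
          rw [card_sbSet]
    _ ≤ (∏ i, n i) * ((∏ i, w i) * (tSet' d w (M+1)).card) := Nat.mul_le_mul_left _ c1
    _ ≤ (∏ i, n i) * ((∏ i, w i) * ((tSet' d n (M+1)).card * D)) := by
          exact Nat.mul_le_mul_left _ (Nat.mul_le_mul_left _ c2)
    _ = ((∏ i, w i) * D) * ((tSet' d n (M+1)).card * (∏ i, n i)) := by ring
    _ ≤ ((∏ i, w i) * D) * (sbSet d (M + E)).card := Nat.mul_le_mul_left _ c3
    _ = ((∏ i, w i) * D) * (M+E+d).choose d := by rw [card_sbSet]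
  have := arith_final (∏ i, n i) ((∏ i, w i) * D) E d hd Hmain
  calc (∏ i, wOrder w (f i)) = ∏ i, n i := rfl
  _ ≤ (∏ i, w i) * D := this
  _ = D * ∏ i, w i := by ring
end

section
/- Let k be a field, let d be a positive integer, let f_1, ..., f_d be elements of the formal power series ring k[[x_1, ..., x_d]], and suppose there is a positive integer N_0 such that the N_0-th power of the maximal ideal (x_1, ..., x_d) of k[[x_1, ..., x_d]] is contained in the ideal (f_1, ..., f_d). Then for every integer N ≥ N_0, letting g_i ∈ k[x_1, ..., x_d] be the truncation of f_i up to total degree N (the polynomial whose coefficient at each monomial of total degree at most N equals that of f_i, and whose other coefficients are zero), the quotients k[[x_1, ..., x_d]]/(f_1, ..., f_d) and k[[x_1, ..., x_d]]/(g_1, ..., g_d) are finite-dimensional k-vector spaces of the same dimension. -/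
open MvPowerSeries

/-- A power series whose coefficients vanish in total degree `< n` lies in the
`n`-th power of the ideal generated by the variables. -/
lemma aux_mem_pow_span_X {k : Type*} [Field k] {d : ℕ} (n : ℕ)
    (φ : MvPowerSeries (Fin d) k)
    (h : ∀ m : Fin d →₀ ℕ, (∑ j, m j) < n → MvPowerSeries.coeff m φ = 0) :
    φ ∈ (Ideal.span (Set.range (MvPowerSeries.X : Fin d → MvPowerSeries (Fin d) k))) ^ n := by
  classical
  induction n generalizing φ with
  | zero => simp
  | succ n ih =>
    set g : Fin d → MvPowerSeries (Fin d) k := fun i =>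
      (fun m' => if ∀ j, j < i → m' j = 0 then
        MvPowerSeries.coeff (m' + Finsupp.single i 1) φ else 0 : (Fin d →₀ ℕ) → k)
      with hg
    have hgc : ∀ i (m' : Fin d →₀ ℕ), MvPowerSeries.coeff m' (g i) =
        if ∀ j, j < i → m' j = 0 then
          MvPowerSeries.coeff (m' + Finsupp.single i 1) φ else 0 := fun i m' => rfl
    have hXi : ∀ i : Fin d, (MvPowerSeries.X i : MvPowerSeries (Fin d) k)
        = MvPowerSeries.monomial (Finsupp.single i 1) 1 := fun i => rfl
    have hφ : φ = ∑ i, MvPowerSeries.X i * g i := by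
      ext m
      rw [map_sum]
      have hterm : ∀ i : Fin d, MvPowerSeries.coeff m (MvPowerSeries.X i * g i)
          = if Finsupp.single i 1 ≤ m ∧ ∀ j, j < i → m j = 0 then
              MvPowerSeries.coeff m φ else 0 := by
        intro i
        rw [hXi, MvPowerSeries.coeff_monomial_mul]
        by_cases hle : Finsupp.single i 1 ≤ m
        · rw [if_pos hle, hgc, one_mul]
          have hadd : m - Finsupp.single i 1 + Finsupp.single i 1 = m :=
            tsub_add_cancel_of_le hle
          have hcoords : ∀ j, j < i → ((m - Finsupp.single i 1) : Fin d →₀ ℕ) j = m j := by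
            intro j hj
            rw [Finsupp.tsub_apply, Finsupp.single_apply, if_neg (by exact Ne.symm (ne_of_lt hj))]
            simp
          by_cases hcond : ∀ j, j < i → m j = 0
          · rw [if_pos (fun j hj => (hcoords j hj).trans (hcond j hj)), hadd,
              if_pos ⟨hle, hcond⟩]
          · rw [if_neg, if_neg (by tauto)]
            intro hc
            exact hcond (fun j hj => (hcoords j hj).symm.trans (hc j hj))
        · rw [if_neg hle, if_neg (by tauto)]
      rw [Finset.sum_congr rfl (fun i _ => hterm i)]
      by_cases hm : m = 0
      · subst hm
        rw [h 0 (by simp)]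
        simp
      · have hsupp : m.support.Nonempty := Finsupp.support_nonempty_iff.mpr hm
        set i₀ := m.support.min' hsupp with hi₀
        have hi₀mem : i₀ ∈ m.support := m.support.min'_mem hsupp
        have hi₀ne : m i₀ ≠ 0 := Finsupp.mem_support_iff.mp hi₀mem
        have hi₀min : ∀ j, j < i₀ → m j = 0 := by
          intro j hj
          by_contra hne
          exact absurd (m.support.min'_le j (Finsupp.mem_support_iff.mpr hne)) (not_le.mpr hj)
        rw [Finset.sum_eq_single i₀]
        · rw [if_pos ⟨Finsupp.single_le_iff.mpr (Nat.one_le_iff_ne_zero.mpr hi₀ne), hi₀min⟩]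
        · intro i _ hne
          rw [if_neg]
          rintro ⟨hle, hcond⟩
          rcases lt_or_gt_of_ne hne with hlt | hgt
          · have h1 : m i = 0 := hi₀min i hlt
            have h2 := Finsupp.single_le_iff.mp hle
            omega
          · exact hi₀ne (hcond i₀ hgt)
        · intro habs
          exact absurd (Finset.mem_univ i₀) habs
    rw [hφ]
    exact Submodule.sum_mem _ (fun i _ => by
      rw [pow_succ, mul_comm (MvPowerSeries.X i)]
      refine Ideal.mul_mem_mul (ih (g i) ?_) (Ideal.subset_span ⟨i, rfl⟩)
      intro m' hm'
      rw [hgc]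
      split_ifs with hcond
      · apply h
        have : ∑ j, ((m' + Finsupp.single i 1) : Fin d →₀ ℕ) j = (∑ j, m' j) + 1 := by
          simp [Finsupp.add_apply, Finset.sum_add_distrib, Finsupp.single_apply]
        omega
      · rfl)

lemma aux_degree_eq_sum {d : ℕ} (m : Fin d →₀ ℕ) : Finsupp.degree m = ∑ j, m j :=
  Finset.sum_subset (Finset.subset_univ _) (fun _ _ hx => Finsupp.notMem_support_iff.mp hx)

lemma aux_fin {k : Type*} [Field k] {d : ℕ} (N₀ : ℕ)
    (I : Ideal (MvPowerSeries (Fin d) k))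
    (hI : (Ideal.span (Set.range (MvPowerSeries.X : Fin d → MvPowerSeries (Fin d) k))) ^ N₀ ≤ I) :
    Module.Finite k (MvPowerSeries (Fin d) k ⧸ I) := by
  classical
  set T : Finset (Fin d →₀ ℕ) := (Finsupp.finite_of_degree_le (σ := Fin d) N₀).toFinset with hT
  rw [Module.finite_def, Submodule.fg_def]
  refine ⟨(fun m => Ideal.Quotient.mk I (MvPowerSeries.monomial m 1)) '' ↑T,
    (T.finite_toSet).image _, ?_⟩
  rw [eq_top_iff]
  rintro x -
  obtain ⟨φ, rfl⟩ := Ideal.Quotient.mk_surjective x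
  set t : MvPowerSeries (Fin d) k :=
    ∑ m ∈ T, MvPowerSeries.coeff m φ • MvPowerSeries.monomial m 1 with ht
  have hct : ∀ m, MvPowerSeries.coeff m t = if m ∈ T then MvPowerSeries.coeff m φ else 0 := by
    intro m
    rw [ht, map_sum (MvPowerSeries.coeff m) _ T]
    simp only [map_smul, MvPowerSeries.coeff_monomial, smul_ite, smul_eq_mul, mul_ite, mul_one, mul_zero, smul_zero]
    exact Finset.sum_ite_eq T m (fun m' => MvPowerSeries.coeff m' φ)
  have hsub : φ - t ∈ I := by
    apply hI
    apply aux_mem_pow_span_X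
    intro m hm
    have hmem : m ∈ T := by
      rw [hT, Set.Finite.mem_toFinset]
      show Finsupp.degree m ≤ N₀
      rw [aux_degree_eq_sum]
      omega
    rw [map_sub, hct, if_pos hmem, sub_self]
  have hmk : Ideal.Quotient.mk I φ = Ideal.Quotient.mk I t := Ideal.Quotient.eq.mpr hsub
  rw [hmk, ← Ideal.Quotient.mkₐ_eq_mk (R₁ := k), ht, map_sum]
  simp only [map_smul]
  apply Submodule.sum_smul_mem
  intro m hm
  exact Submodule.subset_span ⟨m, hm, rfl⟩

theorem stmt2 (k : Type*) [Field k] (d : ℕ) (hd : 0 < d)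
    (f : Fin d → MvPowerSeries (Fin d) k) (N₀ : ℕ) (hN₀ : 0 < N₀)
    (hpow : (Ideal.span (Set.range (MvPowerSeries.X : Fin d → MvPowerSeries (Fin d) k))) ^ N₀ ≤
      Ideal.span (Set.range f)) :
    ∀ N : ℕ, N₀ ≤ N →
      ∀ g : Fin d → MvPolynomial (Fin d) k,
        (∀ i (m : Fin d →₀ ℕ),
          MvPolynomial.coeff m (g i) =
            if (∑ j, m j) ≤ N then MvPowerSeries.coeff m (f i) else 0) →
        FiniteDimensional k (MvPowerSeries (Fin d) k ⧸ Ideal.span (Set.range f)) ∧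
        FiniteDimensional k
          (MvPowerSeries (Fin d) k ⧸
            Ideal.span (Set.range fun i => ((g i : MvPowerSeries (Fin d) k)))) ∧
        Module.finrank k (MvPowerSeries (Fin d) k ⧸ Ideal.span (Set.range f)) =
          Module.finrank k
            (MvPowerSeries (Fin d) k ⧸
              Ideal.span (Set.range fun i => ((g i : MvPowerSeries (Fin d) k)))) := by
  intro N hN g hg
  set M := Ideal.span (Set.range (MvPowerSeries.X : Fin d → MvPowerSeries (Fin d) k)) with hM
  have hdiff : ∀ i, f i - (g i : MvPowerSeries (Fin d) k) ∈ M ^ (N + 1) := by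
    intro i
    apply aux_mem_pow_span_X
    intro m hm
    rw [map_sub, MvPolynomial.coeff_coe, hg i m, if_pos (by omega), sub_self]
  have hMle : M ^ (N + 1) ≤ Ideal.span (Set.range f) :=
    le_trans (Ideal.pow_le_pow_right (by omega)) hpow
  have hgle : Ideal.span (Set.range fun i => ((g i : MvPowerSeries (Fin d) k))) ≤
      Ideal.span (Set.range f) := by
    rw [Ideal.span_le]
    rintro _ ⟨i, rfl⟩
    have h1 : (g i : MvPowerSeries (Fin d) k) = f i - (f i - (g i : MvPowerSeries (Fin d) k)) := by
      ring
    show (g i : MvPowerSeries (Fin d) k) ∈ Ideal.span (Set.range f)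
    rw [h1]
    exact sub_mem (Ideal.subset_span ⟨i, rfl⟩) (hMle (hdiff i))
  have hjac : M ≤ Ideal.jacobson ⊥ := by
    rw [IsLocalRing.jacobson_eq_maximalIdeal ⊥ bot_ne_top, hM, Ideal.span_le]
    rintro _ ⟨i, rfl⟩
    rw [SetLike.mem_coe, IsLocalRing.mem_maximalIdeal, mem_nonunits_iff,
      MvPowerSeries.isUnit_iff_constantCoeff, MvPowerSeries.constantCoeff_X]
    exact not_isUnit_zero
  have hfle : Ideal.span (Set.range f) ≤
      Ideal.span (Set.range fun i => ((g i : MvPowerSeries (Fin d) k))) := by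
    apply Submodule.le_of_le_smul_of_le_jacobson_bot (Submodule.fg_span (Set.finite_range f)) hjac
    rw [Submodule.span_le]
    rintro _ ⟨i, rfl⟩
    have h1 : f i = (g i : MvPowerSeries (Fin d) k) + (f i - (g i : MvPowerSeries (Fin d) k)) := by
      ring
    show f i ∈ (Ideal.span (Set.range fun i => ((g i : MvPowerSeries (Fin d) k))) ⊔
      M • Ideal.span (Set.range f) : Ideal (MvPowerSeries (Fin d) k))
    rw [h1]
    refine Submodule.add_mem_sup (Ideal.subset_span ⟨i, rfl⟩) ?_
    have h2 : M ^ (N + 1) ≤ M • Ideal.span (Set.range f) := by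
      rw [Ideal.smul_eq_mul, pow_succ']
      exact Ideal.mul_mono_right (le_trans (Ideal.pow_le_pow_right hN) hpow)
    exact h2 (hdiff i)
  have heq : Ideal.span (Set.range fun i => ((g i : MvPowerSeries (Fin d) k))) =
      Ideal.span (Set.range f) := le_antisymm hgle hfle
  rw [heq]
  exact ⟨aux_fin N₀ _ hpow, aux_fin N₀ _ hpow, rfl⟩
end

section
/- Let k be a field, let d be a positive integer, and let w = (w_1, ..., w_d) be a d-tuple of positive integers. Let S be the k[x_1, ..., x_d]-subalgebra of the polynomial ring k[x_1, ..., x_d][t] generated by the set { t^j · x_i : 1 ≤ i ≤ d, 0 ≤ j ≤ w_i }. Let f be a nonzero polynomial in k[x_1, ..., x_d] and set a := w(f). Then for every element p of S all of whose coefficients of t^m vanish for m < a, the element p lies in the ideal of S generated by { t^j · f : 0 ≤ j ≤ a } if and only if p lies in the ideal of S generated by the single element t^a · f. In other words, the two ideals have the same intersection with the set of elements of S whose t-coefficients of index below a all vanish. -/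
/-- The weighted order of a nonzero multivariate polynomial: the minimum of
`∑ i, w i * m i` over all monomials `m` occurring in `f` with nonzero coefficient. -/
noncomputable def wOrderPoly {k : Type*} [Field k] {d : ℕ} (w : Fin d → ℕ)
    (f : MvPolynomial (Fin d) k) : ℕ :=
  sInf {n : ℕ | ∃ m : Fin d →₀ ℕ, MvPolynomial.coeff m f ≠ 0 ∧ ∑ i, w i * m i = n}

section Aux

variable {k : Type*} [Field k] {d : ℕ} (w : Fin d → ℕ)

/-- weight of a monomial exponent -/
def wtAux (μ : Fin d →₀ ℕ) : ℕ := ∑ i, w i * μ i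

lemma wtAux_add (μ ν : Fin d →₀ ℕ) : wtAux w (μ + ν) = wtAux w μ + wtAux w ν := by
  simp [wtAux, mul_add, Finset.sum_add_distrib]

lemma wtAux_mono {μ ν : Fin d →₀ ℕ} (h : μ ≤ ν) : wtAux w μ ≤ wtAux w ν :=
  Finset.sum_le_sum fun i _ => Nat.mul_le_mul_left _ (h i)

lemma wtAux_single (i : Fin d) : wtAux w (Finsupp.single i 1) = w i := by
  simp [wtAux, Finsupp.single_apply, mul_ite, Finset.sum_ite_eq']

/-- the monomial ideal of all polynomials of weighted order at least `n` -/
noncomputable def JidAux (n : ℕ) : Ideal (MvPolynomial (Fin d) k) :=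
  Ideal.span ((fun μ => MvPolynomial.monomial μ (1 : k)) '' {μ | n ≤ wtAux w μ})

lemma mem_JidAux {h : MvPolynomial (Fin d) k} {n : ℕ} :
    h ∈ JidAux w n ↔ ∀ μ ∈ h.support, n ≤ wtAux w μ := by
  rw [JidAux, MvPolynomial.mem_ideal_span_monomial_image]
  constructor
  · rintro H μ hμ
    obtain ⟨s, hs, hle⟩ := H μ hμ
    exact hs.trans (wtAux_mono w hle)
  · intro H μ hμ
    exact ⟨μ, H μ hμ, le_rfl⟩

lemma JidAux_antitone {n n' : ℕ} (h : n ≤ n') : JidAux (k := k) w n' ≤ JidAux w n := by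
  intro x hx
  rw [mem_JidAux] at hx ⊢
  exact fun μ hμ => h.trans (hx μ hμ)

lemma mem_JidAux_zero (h : MvPolynomial (Fin d) k) : h ∈ JidAux w 0 :=
  (mem_JidAux w).2 fun _ _ => Nat.zero_le _

lemma JidAux_mul {h₁ h₂ : MvPolynomial (Fin d) k} {n₁ n₂ : ℕ}
    (H₁ : h₁ ∈ JidAux w n₁) (H₂ : h₂ ∈ JidAux w n₂) : h₁ * h₂ ∈ JidAux w (n₁ + n₂) := by
  rw [mem_JidAux] at H₁ H₂ ⊢
  intro μ hμ
  classical
  have := MvPolynomial.support_mul h₁ h₂ hμ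
  rw [Finset.mem_add] at this
  obtain ⟨μ₁, hμ₁, μ₂, hμ₂, rfl⟩ := this
  rw [wtAux_add]
  exact Nat.add_le_add (H₁ μ₁ hμ₁) (H₂ μ₂ hμ₂)

lemma wOrderPoly_le {f : MvPolynomial (Fin d) k} {μ : Fin d →₀ ℕ}
    (h : MvPolynomial.coeff μ f ≠ 0) : wOrderPoly w f ≤ wtAux w μ :=
  Nat.sInf_le ⟨μ, h, rfl⟩

lemma exists_wOrderPoly {f : MvPolynomial (Fin d) k} (hf : f ≠ 0) :
    ∃ μ, MvPolynomial.coeff μ f ≠ 0 ∧ wtAux w μ = wOrderPoly w f := by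
  have hne : {n : ℕ | ∃ m : Fin d →₀ ℕ, MvPolynomial.coeff m f ≠ 0 ∧ ∑ i, w i * m i = n}.Nonempty := by
    obtain ⟨μ, hμ⟩ := (MvPolynomial.ne_zero_iff.1 hf)
    exact ⟨wtAux w μ, μ, hμ, rfl⟩
  exact Nat.sInf_mem hne

lemma mem_JidAux_wOrder {f : MvPolynomial (Fin d) k} : f ∈ JidAux w (wOrderPoly w f) :=
  (mem_JidAux w).2 fun μ hμ => wOrderPoly_le w (MvPolynomial.mem_support_iff.1 hμ)

/-- the weighted homogeneous part of weight `n` -/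
noncomputable def partAux (n : ℕ) (h : MvPolynomial (Fin d) k) : MvPolynomial (Fin d) k := by
  classical
  exact ∑ μ ∈ h.support.filter (fun μ => wtAux w μ = n), MvPolynomial.monomial μ (h.coeff μ)

lemma coeff_partAux (n : ℕ) (h : MvPolynomial (Fin d) k) (ν : Fin d →₀ ℕ) :
    (partAux w n h).coeff ν = if wtAux w ν = n then h.coeff ν else 0 := by
  classical
  rw [partAux]
  rw [MvPolynomial.coeff_sum]
  simp_rw [MvPolynomial.coeff_monomial]
  rw [Finset.sum_ite_eq' (h.support.filter (fun μ => wtAux w μ = n)) ν (fun μ => h.coeff μ)]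
  by_cases hν : ν ∈ h.support
  · simp [Finset.mem_filter, hν]
  · rw [MvPolynomial.notMem_support_iff] at hν
    simp [Finset.mem_filter, hν]

lemma partAux_ne_zero {f : MvPolynomial (Fin d) k} (hf : f ≠ 0) :
    partAux w (wOrderPoly w f) f ≠ 0 := by
  obtain ⟨μ, hμ, hwt⟩ := exists_wOrderPoly w hf
  intro h0
  have := coeff_partAux w (wOrderPoly w f) f μ
  rw [h0, hwt, if_pos rfl] at this
  exact hμ this.symm

lemma partAux_mem (n : ℕ) (h : MvPolynomial (Fin d) k) : partAux w n h ∈ JidAux w n := by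
  rw [mem_JidAux]
  intro μ hμ
  rw [MvPolynomial.mem_support_iff, coeff_partAux] at hμ
  by_cases hwt : wtAux w μ = n
  · exact hwt.ge
  · simp [hwt] at hμ

lemma sub_partAux_mem {f : MvPolynomial (Fin d) k} {n : ℕ} (hfn : f ∈ JidAux w n) :
    f - partAux w n f ∈ JidAux w (n + 1) := by
  rw [mem_JidAux]
  intro μ hμ
  rw [MvPolynomial.mem_support_iff, MvPolynomial.coeff_sub, coeff_partAux] at hμ
  by_cases hwt : wtAux w μ = n
  · simp [hwt] at hμ
  · rw [if_neg hwt, sub_zero] at hμ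
    have := (mem_JidAux w).1 hfn μ (MvPolynomial.mem_support_iff.2 hμ)
    omega

lemma key_not_mem {f g : MvPolynomial (Fin d) k} (hf : f ≠ 0) (hg : g ≠ 0) :
    f * g ∉ JidAux w (wOrderPoly w f + wOrderPoly w g + 1) := by
  set a := wOrderPoly w f with ha
  set b := wOrderPoly w g with hb
  set fa := partAux w a f with hfa
  set gb := partAux w b g with hgb
  have hfane : fa ≠ 0 := partAux_ne_zero w hf
  have hgbne : gb ≠ 0 := partAux_ne_zero w hg
  have hrest : (f - fa) * g + fa * (g - gb) ∈ JidAux w (a + b + 1) := by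
    apply Ideal.add_mem
    · have := JidAux_mul w (sub_partAux_mem w (mem_JidAux_wOrder w (f := f))) (mem_JidAux_wOrder w (f := g))
      have heq : a + 1 + b = a + b + 1 := by omega
      rwa [heq] at this
    · have h2 := JidAux_mul w (partAux_mem w a f) (sub_partAux_mem w (mem_JidAux_wOrder w (f := g)))
      have heq : a + (b + 1) = a + b + 1 := by omega
      rwa [heq] at h2
  have hsplit : f * g = fa * gb + ((f - fa) * g + fa * (g - gb)) := by ring
  intro hmem
  have hfg : fa * gb ∈ JidAux w (a + b + 1) := by
    have : fa * gb = f * g - ((f - fa) * g + fa * (g - gb)) := by rw [hsplit]; ring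
    rw [this]
    exact Ideal.sub_mem _ hmem hrest
  -- but fa * gb is nonzero with all monomials of weight a + b
  have hne : fa * gb ≠ 0 := mul_ne_zero hfane hgbne
  obtain ⟨ν, hν⟩ := MvPolynomial.ne_zero_iff.1 hne
  have hνsupp : ν ∈ (fa * gb).support := MvPolynomial.mem_support_iff.2 hν
  classical
  have := MvPolynomial.support_mul fa gb hνsupp
  rw [Finset.mem_add] at this
  obtain ⟨μ₁, hμ₁, μ₂, hμ₂, rfl⟩ := this
  have h1 : wtAux w μ₁ = a := by
    have := MvPolynomial.mem_support_iff.1 hμ₁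
    rw [hfa, coeff_partAux] at this
    by_contra hc
    simp [hc] at this
  have h2 : wtAux w μ₂ = b := by
    have := MvPolynomial.mem_support_iff.1 hμ₂
    rw [hgb, coeff_partAux] at this
    by_contra hc
    simp [hc] at this
  have := (mem_JidAux w).1 hfg _ hνsupp
  rw [wtAux_add, h1, h2] at this
  omega

lemma key_cancel {f g : MvPolynomial (Fin d) k} (hf : f ≠ 0) {m : ℕ}
    (h : f * g ∈ JidAux w (wOrderPoly w f + m)) : g ∈ JidAux w m := by
  by_contra hg
  have hgne : g ≠ 0 := by
    intro h0
    exact hg (h0 ▸ Ideal.zero_mem _)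
  rw [mem_JidAux] at hg
  push_neg at hg
  obtain ⟨μ, hμ, hlt⟩ := hg
  have hb : wOrderPoly w g < m :=
    lt_of_le_of_lt (wOrderPoly_le w (MvPolynomial.mem_support_iff.1 hμ)) hlt
  exact key_not_mem w hf hgne
    (JidAux_antitone w (by omega) h)

/-- The subalgebra of all `p` with `coeff m p` of weighted order at least `m`. -/
def TsubAux : Subalgebra (MvPolynomial (Fin d) k) (Polynomial (MvPolynomial (Fin d) k)) where
  carrier := {p | ∀ m, p.coeff m ∈ JidAux w m}
  add_mem' := by
    intro p q hp hq m
    rw [Polynomial.coeff_add]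
    exact Ideal.add_mem _ (hp m) (hq m)
  mul_mem' := by
    intro p q hp hq m
    rw [Polynomial.coeff_mul]
    apply Ideal.sum_mem
    rintro ⟨i, j⟩ hij
    have : i + j = m := Finset.HasAntidiagonal.mem_antidiagonal.1 hij
    exact this ▸ JidAux_mul w (hp i) (hq j)
  algebraMap_mem' := by
    intro r m
    show (Polynomial.C r).coeff m ∈ JidAux w m
    rw [Polynomial.coeff_C]
    by_cases hm : m = 0
    · subst hm; rw [if_pos rfl]; exact mem_JidAux_zero w r
    · rw [if_neg hm]; exact Ideal.zero_mem _

lemma mem_TsubAux {p : Polynomial (MvPolynomial (Fin d) k)} :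
    p ∈ TsubAux w ↔ ∀ m, p.coeff m ∈ JidAux w m := Iff.rfl

noncomputable def SadjAux : Subalgebra (MvPolynomial (Fin d) k) (Polynomial (MvPolynomial (Fin d) k)) :=
  Algebra.adjoin (MvPolynomial (Fin d) k)
    {p : Polynomial (MvPolynomial (Fin d) k) |
      ∃ i : Fin d, ∃ j ≤ w i, p = Polynomial.C (MvPolynomial.X i) * Polynomial.X ^ j}

lemma SadjAux_le_TsubAux : SadjAux (k := k) w ≤ TsubAux w := by
  apply Algebra.adjoin_le
  rintro p ⟨i, j, hj, rfl⟩
  show ∀ m, _ ∈ _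
  intro m
  rw [Polynomial.coeff_C_mul, Polynomial.coeff_X_pow]
  by_cases hm : m = j
  · rw [if_pos hm, mul_one]
    apply (mem_JidAux w).2
    intro μ hμ
    rw [MvPolynomial.support_X, Finset.mem_singleton] at hμ
    rw [hμ, wtAux_single]
    omega
  · rw [if_neg hm, mul_zero]
    exact Ideal.zero_mem _

lemma monomial_mem_SadjAux (hw : ∀ i, 0 < w i) :
    ∀ m : ℕ, ∀ μ : Fin d →₀ ℕ, m ≤ wtAux w μ →
      Polynomial.C (MvPolynomial.monomial μ (1 : k)) * Polynomial.X ^ m ∈ SadjAux w := by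
  intro m
  induction m using Nat.strong_induction_on with
  | _ m ih =>
    intro μ hm
    by_cases hm0 : m = 0
    · subst hm0
      rw [pow_zero, mul_one]
      exact Subalgebra.algebraMap_mem (SadjAux w) (MvPolynomial.monomial μ (1 : k))
    · have hpos : 0 < m := Nat.pos_of_ne_zero hm0
      have hwt : 0 < wtAux w μ := lt_of_lt_of_le hpos hm
      have : ∃ i : Fin d, w i * μ i ≠ 0 := by
        by_contra hc
        push_neg at hc
        rw [wtAux] at hwt
        rw [Finset.sum_eq_zero (fun i _ => hc i)] at hwt
        omega
      obtain ⟨i, hi⟩ := this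
      have hμi : 0 < μ i := by
        rcases Nat.eq_zero_or_pos (μ i) with h | h
        · rw [h, mul_zero] at hi; omega
        · exact h
      set j := min m (w i) with hj
      have hjpos : 0 < j := lt_min hpos (hw i)
      have hjle : j ≤ w i := min_le_right _ _
      have hjm : j ≤ m := min_le_left _ _
      set μ' := μ - Finsupp.single i 1 with hμ'
      have hμeq : μ = μ' + Finsupp.single i 1 := by
        ext x
        rw [hμ']
        simp only [Finsupp.coe_add, Finsupp.coe_tsub, Pi.add_apply, Pi.sub_apply]
        by_cases hx : x = i
        · subst hx; simp [Finsupp.single_apply]; omega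
        · simp [Finsupp.single_apply, Ne.symm hx]
      have hwt' : wtAux w μ = wtAux w μ' + w i := by
        conv_lhs => rw [hμeq]
        rw [wtAux_add, wtAux_single]
      have hmle : m - j ≤ wtAux w μ' := by
        rcases le_or_gt m (w i) with h | h
        · have : j = m := min_eq_left h
          omega
        · have : j = w i := min_eq_right h.le
          omega
      have h1 : Polynomial.C (MvPolynomial.monomial μ' (1 : k)) * Polynomial.X ^ (m - j)
          ∈ SadjAux w := ih (m - j) (by omega) μ' hmle
      have h2 : Polynomial.C (MvPolynomial.X (R := k) i) * Polynomial.X ^ j ∈ SadjAux w :=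
        Algebra.subset_adjoin ⟨i, j, hjle, rfl⟩
      have heq : Polynomial.C (MvPolynomial.monomial μ (1 : k)) * Polynomial.X ^ m =
          (Polynomial.C (MvPolynomial.monomial μ' (1 : k)) * Polynomial.X ^ (m - j)) *
          (Polynomial.C (MvPolynomial.X i) * Polynomial.X ^ j) := by
        have hmon : MvPolynomial.monomial μ (1 : k) =
            MvPolynomial.monomial μ' (1 : k) * MvPolynomial.X i := by
          rw [MvPolynomial.X, MvPolynomial.monomial_mul, mul_one, ← hμeq]
        have hx : (Polynomial.X : Polynomial (MvPolynomial (Fin d) k)) ^ m =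
            Polynomial.X ^ (m - j) * Polynomial.X ^ j := by
          rw [← pow_add]
          congr 1
          omega
        rw [hmon, map_mul, hx]
        ring
      rw [heq]
      exact Subalgebra.mul_mem _ h1 h2

lemma C_mul_X_pow_mem_SadjAux (hw : ∀ i, 0 < w i) {h : MvPolynomial (Fin d) k} {m : ℕ}
    (hh : h ∈ JidAux w m) : Polynomial.C h * Polynomial.X ^ m ∈ SadjAux w := by
  rw [JidAux] at hh
  induction hh using Submodule.span_induction with
  | mem x hx =>
    obtain ⟨μ, hμ, rfl⟩ := hx
    exact monomial_mem_SadjAux w hw m μ hμ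
  | zero => rw [map_zero, zero_mul]; exact Subalgebra.zero_mem _
  | add x y hx hy ihx ihy =>
    rw [map_add, add_mul]
    exact Subalgebra.add_mem _ ihx ihy
  | smul r x hx ihx =>
    have : Polynomial.C (r • x) * Polynomial.X ^ m =
        Polynomial.C r * (Polynomial.C x * Polynomial.X ^ m) := by
      rw [smul_eq_mul, map_mul]; ring
    rw [this]
    exact Subalgebra.mul_mem _ (Subalgebra.algebraMap_mem (SadjAux w) r) ihx

lemma TsubAux_le_SadjAux (hw : ∀ i, 0 < w i) {p : Polynomial (MvPolynomial (Fin d) k)}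
    (hp : ∀ m, p.coeff m ∈ JidAux w m) : p ∈ SadjAux w := by
  rw [p.as_sum_support_C_mul_X_pow]
  apply Subalgebra.sum_mem
  intro m _
  exact C_mul_X_pow_mem_SadjAux w hw (hp m)

end Aux

theorem stmt5 (k : Type*) [Field k] (d : ℕ) (hd : 0 < d) (w : Fin d → ℕ)
    (hw : ∀ i, 0 < w i)
    (S : Subalgebra (MvPolynomial (Fin d) k) (Polynomial (MvPolynomial (Fin d) k)))
    (hS : S = Algebra.adjoin (MvPolynomial (Fin d) k)
      {p : Polynomial (MvPolynomial (Fin d) k) |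
        ∃ i : Fin d, ∃ j ≤ w i, p = Polynomial.C (MvPolynomial.X i) * Polynomial.X ^ j})
    (f : MvPolynomial (Fin d) k) (hf : f ≠ 0) (a : ℕ) (ha : a = wOrderPoly w f) :
    ∀ p : S, (∀ m : ℕ, m < a → (p : Polynomial (MvPolynomial (Fin d) k)).coeff m = 0) →
      (p ∈ Ideal.span {s : S | ∃ j ≤ a,
          (s : Polynomial (MvPolynomial (Fin d) k)) = Polynomial.C f * Polynomial.X ^ j} ↔
        p ∈ Ideal.span {s : S |
          (s : Polynomial (MvPolynomial (Fin d) k)) = Polynomial.C f * Polynomial.X ^ a}) := by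
  have hSeq : S = SadjAux w := hS
  subst hSeq
  intro p hcoeff
  constructor
  · intro hp
    -- coerce into the principal ideal of `R[t]`
    have h1 : (p : Polynomial (MvPolynomial (Fin d) k)) ∈ Ideal.span {Polynomial.C f} := by
      have hmap := Ideal.mem_map_of_mem ((SadjAux w).val).toRingHom hp
      rw [Ideal.map_span] at hmap
      refine Ideal.span_le.2 ?_ hmap
      rintro _ ⟨s, ⟨j, _, hs⟩, rfl⟩
      show ((SadjAux w).val s : Polynomial (MvPolynomial (Fin d) k)) ∈ _
      rw [Subalgebra.coe_val, hs]
      exact Ideal.mem_span_singleton.2 ⟨Polynomial.X ^ j, rfl⟩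
    obtain ⟨q, hq⟩ := Ideal.mem_span_singleton.1 h1
    have hq0 : ∀ m < a, q.coeff m = 0 := by
      intro m hm
      have := hcoeff m hm
      rw [hq, Polynomial.coeff_C_mul] at this
      exact (mul_eq_zero.1 this).resolve_left hf
    obtain ⟨q', hq'⟩ := Polynomial.X_pow_dvd_iff.2 hq0
    have hpT : ∀ m, (p : Polynomial (MvPolynomial (Fin d) k)).coeff m ∈ JidAux w m :=
      (mem_TsubAux w).1 (SadjAux_le_TsubAux w p.2)
    have hq'J : ∀ m, q'.coeff m ∈ JidAux w m := by
      intro m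
      apply key_cancel w hf (m := m)
      have h2 := hpT (m + a)
      rw [hq, hq', Polynomial.coeff_C_mul, Polynomial.coeff_X_pow_mul] at h2
      have heq : m + a = wOrderPoly w f + m := by omega
      rwa [heq] at h2
    have hq'S : q' ∈ SadjAux w := TsubAux_le_SadjAux w hw hq'J
    have hfaS : (Polynomial.C f * Polynomial.X ^ a : Polynomial (MvPolynomial (Fin d) k))
        ∈ SadjAux w := by
      apply TsubAux_le_SadjAux w hw
      intro m
      rw [Polynomial.coeff_C_mul, Polynomial.coeff_X_pow]
      by_cases hm : m = a
      · rw [if_pos hm, mul_one]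
        subst hm
        rw [ha]
        exact mem_JidAux_wOrder w
      · rw [if_neg hm, mul_zero]
        exact Ideal.zero_mem _
    have hpeq : p = (⟨q', hq'S⟩ : SadjAux w) * ⟨_, hfaS⟩ := by
      apply Subtype.ext
      push_cast
      rw [hq, hq']
      ring
    rw [hpeq]
    exact Ideal.mul_mem_left _ _ (Ideal.subset_span rfl)
  · intro hp
    refine Ideal.span_mono ?_ hp
    rintro s hs
    exact ⟨a, le_rfl, hs⟩
end
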